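/- arXiv:0708.1430 — 8 statements merged into one kernel-verified Lean document; each statement's English description precedes it below -/
import Mathlib

section
/- Let χ_B : ℤ → ℤ be defined by χ_B(x) = 0 if x ≡ 0 (mod 2), χ_B(x) = 1 if x ≡ 1 (mod 4), and χ_B(x) = -1 if x ≡ 3 (mod 4). Then for all natural numbers n, k, χ_B(C(2n, 2k)) = χ_B(C(n, k)). -/
/-- The nontrivial Dirichlet character mod 4, extended by 0 on even integers. -/
def chiB (x : ℤ) : ℤ :=
  if x % 2 = 0 then 0 else if x % 4 = 1 then 1 else -1

lemma two_dvd_choose_odd (n k : ℕ) : 2 ∣ Nat.choose (2 * n) (2 * k + 1) := by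
  rcases n with _ | m
  · simp [Nat.choose_eq_zero_of_lt]
  · have h := Nat.add_one_mul_choose_eq (2 * m + 1) (2 * k)
    have h2 : (2 * (m + 1)) * Nat.choose (2 * m + 1) (2 * k)
        = Nat.choose (2 * (m + 1)) (2 * k + 1) * (2 * k + 1) := by
      have : 2 * (m + 1) = (2 * m + 1) + 1 := by ring
      rw [this]
      simpa using h
    have hdvd : 2 ∣ Nat.choose (2 * (m + 1)) (2 * k + 1) * (2 * k + 1) := by
      rw [← h2]
      exact Dvd.dvd.mul_right (by exact ⟨m + 1, rfl⟩) _
    have hcop : Nat.Coprime 2 (2 * k + 1) := by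
      simp [Nat.coprime_two_left, Nat.odd_iff]
    exact hcop.dvd_of_dvd_mul_right hdvd

lemma choose_mod4 (n : ℕ) : ∀ k : ℕ,
    ((Nat.choose (2 * n) (2 * k) : ZMod 4)) = (Nat.choose n k : ZMod 4) := by
  induction n with
  | zero =>
    intro k
    rcases k with _ | j
    · simp
    · simp [Nat.choose_eq_zero_of_lt]
  | succ m ih =>
    intro k
    rcases k with _ | j
    · simp
    · have e1 : 2 * (m + 1) = (2 * m + 1) + 1 := by ring
      have e2 : 2 * (j + 1) = (2 * j + 1) + 1 := by ring
      rw [e1, e2, Nat.choose_succ_succ, Nat.choose_succ_succ, Nat.choose_succ_succ]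
      -- choose (2m+1) (2j+1) = choose (2m) (2j) + choose (2m) (2j+1)
      -- choose (2m+1) (2j+2) = choose (2m) (2j+1) + choose (2m) (2j+2)
      obtain ⟨c, hc⟩ := two_dvd_choose_odd m j
      push_cast
      have hA : ((Nat.choose (2 * m) (2 * j) : ZMod 4)) = (Nat.choose m j : ZMod 4) := ih j
      have hB : ((Nat.choose (2 * m) (2 * (j + 1)) : ZMod 4)) = (Nat.choose m (j + 1) : ZMod 4) :=
        ih (j + 1)
      simp only [Nat.succ_eq_add_one]
      have e3 : (2 * j + 1) + 1 = 2 * (j + 1) := by ring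
      have e4 : (2 * j) + 1 = 2 * j + 1 := rfl
      rw [e3, e4, hc]
      push_cast [hA]
      have hB' : ((Nat.choose (2 * m) (2 * (j + 1)) : ZMod 4)) = (Nat.choose m (j + 1) : ZMod 4) := hB
      rw [hB']
      have h4 : (2 : ZMod 4) * (2 * c) = 0 := by
        have h22 : (2 : ZMod 4) * 2 = 0 := by decide
        rw [← mul_assoc, h22, zero_mul]
      have hchoose : ((m + 1).choose (j + 1) : ZMod 4) = (m.choose j : ZMod 4) + (m.choose (j + 1) : ZMod 4) := by
        rw [Nat.choose_succ_succ]; push_cast; ring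
      rw [hchoose]
      push_cast at h4 ⊢
      linear_combination h4

lemma chiB_eq_of_mod4 (x y : ℤ) (h : x % 4 = y % 4) : chiB x = chiB y := by
  unfold chiB
  rw [← Int.emod_emod_of_dvd x (by norm_num : (2:ℤ) ∣ 4),
      ← Int.emod_emod_of_dvd y (by norm_num : (2:ℤ) ∣ 4), h]

theorem chiB_choose_two_mul (n k : ℕ) :
    chiB ((Nat.choose (2 * n) (2 * k) : ℤ)) = chiB ((Nat.choose n k : ℤ)) := by
  apply chiB_eq_of_mod4
  have h := choose_mod4 n k
  rw [ZMod.natCast_eq_natCast_iff] at h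
  have h' : (Nat.choose (2*n) (2*k)) % 4 = (Nat.choose n k) % 4 := h
  omega
end

section
/- Let χ_B be the Dirichlet character mod 4 with χ_B(even)=0, χ_B(4m±1)=±1. Then for all natural numbers n, k, χ_B(C(2n+1, 2k)) = (-1)^k · χ_B(C(n, k)). -/
lemma chiB_congr {x y : ℤ} (h : x % 4 = y % 4) : chiB x = chiB y := by
  unfold chiB
  have hx : x % 2 = x % 4 % 2 := (Int.emod_emod_of_dvd x (by norm_num)).symm
  have hy : y % 2 = y % 4 % 2 := (Int.emod_emod_of_dvd y (by norm_num)).symm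
  rw [hx, hy, h]

lemma chiB_neg (x : ℤ) : chiB (-x) = - chiB x := by
  unfold chiB
  split_ifs <;> omega

lemma h4 : (4 : ZMod 4) = 0 := by decide

lemma pascal2 (m j : ℕ) :
    Nat.choose (m+2) (j+2) = Nat.choose m j + 2 * Nat.choose m (j+1) + Nat.choose m (j+2) := by
  rw [Nat.choose_succ_succ (m+1) (j+1), Nat.choose_succ_succ m j, Nat.choose_succ_succ m (j+1)]
  ring

lemma key (n : ℕ) : ∀ k : ℕ,
    ((Nat.choose (2*n+1) (2*k) : ZMod 4) = (1+2*k) * Nat.choose n k) ∧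
    ((Nat.choose (2*n+1) (2*k+1) : ZMod 4) = Nat.choose n k + 2*(k+1) * Nat.choose n (k+1)) := by
  induction n with
  | zero =>
    intro k
    cases k with
    | zero => simp
    | succ k =>
      have h1 : Nat.choose 1 (2*(k+1)) = 0 := Nat.choose_eq_zero_of_lt (by omega)
      have h2 : Nat.choose 1 (2*(k+1)+1) = 0 := Nat.choose_eq_zero_of_lt (by omega)
      have h3 : Nat.choose 0 (k+1) = 0 := Nat.choose_eq_zero_of_lt (by omega)
      have h5 : Nat.choose 0 (k+2) = 0 := Nat.choose_eq_zero_of_lt (by omega)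
      simp [h1, h2, h3, h5]
  | succ n ih =>
    intro k
    have hP : ∀ j : ℕ, ((Nat.choose (2*(n+1)+1) (j+2) : ZMod 4))
        = Nat.choose (2*n+1) j + 2 * Nat.choose (2*n+1) (j+1) + Nat.choose (2*n+1) (j+2) := by
      intro j
      rw [show 2*(n+1)+1 = (2*n+1)+2 by ring, pascal2]
      push_cast
      ring
    constructor
    · cases k with
      | zero => simp
      | succ k =>
        have hA := (ih k).1
        have hB := (ih k).2
        have hA' := (ih (k+1)).1
        rw [show 2*(k+1) = (2*k)+2 by ring, hP (2*k),
            show 2*k+2 = 2*(k+1) by ring, Nat.choose_succ_succ n k]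
        push_cast at hA hB hA' ⊢
        linear_combination hA + 2*hB + hA' + ((k : ZMod 4)+1) * (Nat.choose n (k+1) : ZMod 4) * h4
    · cases k with
      | zero =>
        rw [Nat.choose_one_right, Nat.choose_one_right, Nat.choose_zero_right]
        push_cast
        ring
      | succ k =>
        have hB := (ih k).2
        have hA' := (ih (k+1)).1
        have hB' := (ih (k+1)).2
        rw [show 2*(k+1)+1 = (2*k+1)+2 by ring, hP (2*k+1),
            show 2*k+1+1 = 2*(k+1) by ring, show 2*k+1+2 = 2*(k+1)+1 by ring,
            Nat.choose_succ_succ n k, Nat.choose_succ_succ n (k+1)]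
        push_cast at hB hA' hB' ⊢
        linear_combination hB + 2*hA' + hB' + ((k : ZMod 4)+1) * (Nat.choose n (k+1) : ZMod 4) * h4

lemma chiB_neg_one_pow_mul (k : ℕ) (m : ℤ) : chiB ((-1)^k * m) = (-1)^k * chiB m := by
  rcases Nat.even_or_odd k with h | h
  · rw [h.neg_one_pow]; simp
  · rw [h.neg_one_pow]; simp [chiB_neg]

theorem chiB_choose_odd_even (n k : ℕ) :
    chiB ((Nat.choose (2 * n + 1) (2 * k) : ℤ)) = (-1) ^ k * chiB ((Nat.choose n k : ℤ)) := by
  have hk := (key n k).1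
  have hsign : ((1 : ZMod 4) + 2*k) = (-1)^k := by
    rcases Nat.even_or_odd k with h | h
    · obtain ⟨m, rfl⟩ := h
      rw [Even.neg_one_pow ⟨m, rfl⟩]
      push_cast
      linear_combination (m : ZMod 4) * h4
    · obtain ⟨m, rfl⟩ := h
      rw [Odd.neg_one_pow ⟨m, rfl⟩]
      push_cast
      linear_combination ((m : ZMod 4) + 1) * h4
  have hcast : ((Nat.choose (2*n+1) (2*k) : ℤ) : ZMod 4) = (((-1)^k * (Nat.choose n k : ℤ) : ℤ) : ZMod 4) := by
    push_cast
    rw [hk, hsign]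
  have hmod : (Nat.choose (2*n+1) (2*k) : ℤ) % 4 = ((-1)^k * (Nat.choose n k : ℤ)) % 4 := by
    have := (ZMod.intCast_eq_intCast_iff' _ _ 4).mp hcast
    exact_mod_cast this
  rw [chiB_congr hmod, chiB_neg_one_pow_mul]
end

section
/- Let χ_B be the Dirichlet character mod 4 with χ_B(even)=0, χ_B(4m±1)=±1. Then for all natural numbers n, k, χ_B(C(2n+1, 2k+1)) = (-1)^{n(k+1)} · χ_B(C(n, k)). -/
/-!
`chiB` is the character `χ₄`, hence multiplicative. Writing `n = k + b` and
`oddProd m = 1 · 3 ⋯ (2m - 1)`, splitting factorials into their even and odd parts gives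
`C(2n+1, 2k+1) · oddProd (k+1) · oddProd b = C(n, k) · oddProd (n+1)`.
Since `χ₄ (2i+1) = (-1)^i`, the odd products are units under `χ₄` and
`χ₄ (oddProd (a+b)) = (-1)^(ab) χ₄ (oddProd a) χ₄ (oddProd b)`; cancelling leaves the sign
`(-1)^((k+1) b)`, which agrees with `(-1)^(n (k+1))` because `k (k+1)` is even.
-/

open Finset ZMod Nat

def oddProd (m : ℕ) : ℕ := ∏ i ∈ range m, (2 * i + 1)

lemma oddProd_succ (m : ℕ) : oddProd (m + 1) = oddProd m * (2 * m + 1) :=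
  prod_range_succ _ _

lemma factorial_two_mul_eq (m : ℕ) : (2 * m)! = 2 ^ m * m ! * oddProd m := by
  induction m with
  | zero => simp [oddProd]
  | succ m ih =>
    rw [show 2 * (m + 1) = 2 * m + 1 + 1 by ring, factorial_succ, factorial_succ, ih,
      oddProd_succ, factorial_succ, pow_succ]
    ring

lemma factorial_two_mul_add_one_eq (m : ℕ) :
    (2 * m + 1)! = 2 ^ m * m ! * oddProd (m + 1) := by
  rw [factorial_succ, factorial_two_mul_eq, oddProd_succ]
  ring

lemma choose_two_mul_add_one_mul_oddProd (a b : ℕ) :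
    (2 * (a + b) + 1).choose (2 * a + 1) * (oddProd (a + 1) * oddProd b) =
      (a + b).choose a * oddProd (a + b + 1) := by
  have hsplit : 2 * (a + b) + 1 = (2 * a + 1) + 2 * b := by ring
  have hchoose : ((2 * (a + b) + 1).choose (2 * a + 1) : ℚ) =
      (2 * (a + b) + 1)! / ((2 * a + 1)! * (2 * b)!) := by
    rw [hsplit, cast_add_choose]
  have hodd (m : ℕ) : (oddProd m : ℚ) ≠ 0 :=
    Nat.cast_ne_zero.2 (prod_ne_zero_iff.2 fun i _ ↦ by omega)
  suffices h : ((2 * (a + b) + 1).choose (2 * a + 1) : ℚ) * (oddProd (a + 1) * oddProd b) =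
      (a + b).choose a * oddProd (a + b + 1) by exact_mod_cast h
  rw [hchoose, cast_add_choose, factorial_two_mul_add_one_eq, factorial_two_mul_add_one_eq,
    factorial_two_mul_eq]
  have := hodd (a + 1)
  have := hodd b
  push_cast
  field_simp
  ring

lemma chiB_eq_χ₄ (x : ℤ) : chiB x = χ₄ x :=
  (χ₄_int_eq_if_mod_four x).symm

lemma χ₄_two_mul_add_one (m : ℕ) : χ₄ (2 * m + 1 : ℕ) = (-1) ^ m := by
  rw [χ₄_eq_neg_one_pow (by omega)]
  congr 1
  omega

lemma χ₄_oddProd (m : ℕ) : χ₄ (oddProd m : ℕ) = (-1) ^ (∑ i ∈ range m, i) := by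
  simp only [oddProd, cast_prod, map_prod, χ₄_two_mul_add_one]
  exact prod_pow_eq_pow_sum _ _ _

lemma χ₄_oddProd_add (a b : ℕ) :
    χ₄ (oddProd (a + b) : ℕ) = (-1) ^ (a * b) * χ₄ (oddProd a : ℕ) * χ₄ (oddProd b : ℕ) := by
  rw [χ₄_oddProd, χ₄_oddProd, χ₄_oddProd, sum_range_add, Finset.sum_add_distrib, sum_const,
    card_range, smul_eq_mul, pow_add, pow_add]
  ring

theorem chiB_choose_odd_odd (n k : ℕ) :
    chiB ((Nat.choose (2 * n + 1) (2 * k + 1) : ℤ)) =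
      (-1) ^ (n * (k + 1)) * chiB ((Nat.choose n k : ℤ)) := by
  simp only [chiB_eq_χ₄, Int.cast_natCast]
  rcases le_or_gt k n with hkn | hnk
  · obtain ⟨b, rfl⟩ := exists_add_of_le hkn
    have h := congrArg (fun m : ℕ ↦ χ₄ m) (choose_two_mul_add_one_mul_oddProd k b)
    simp only [Nat.cast_mul, map_mul, add_right_comm k b 1] at h
    rw [χ₄_oddProd_add (k + 1) b] at h
    have hunit : χ₄ (oddProd (k + 1) : ℕ) * χ₄ (oddProd b : ℕ) ≠ 0 := by
      rw [χ₄_oddProd, χ₄_oddProd, ← pow_add]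
      exact pow_ne_zero _ (by norm_num)
    have hsign : (-1 : ℤ) ^ ((k + b) * (k + 1)) = (-1) ^ ((k + 1) * b) := by
      rw [add_mul, pow_add, (Nat.even_mul_succ_self k).neg_one_pow, one_mul, mul_comm]
    rw [hsign]
    exact mul_right_cancel₀ hunit (by linear_combination h)
  · simp [choose_eq_zero_of_lt hnk, choose_eq_zero_of_lt (show 2 * n + 1 < 2 * k + 1 by omega)]
end

section
/- Let P(m) be the m×m integer matrix with entries P_{s,t} = C(s+t, s) mod 2 ∈ {0,1} for 0 ≤ s,t < m. Then det(P(2n)) = (-1)^n for all n ≥ 1. -/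
open Finset Matrix

/-- The set of binary digit positions of `n`. -/
def bset (n : ℕ) : Finset ℕ := n.bitIndices.toFinset

lemma toFinset_map' (l : List ℕ) (f : ℕ → ℕ) : (l.map f).toFinset = l.toFinset.image f := by
  ext x; simp

lemma bset_two_mul (a : ℕ) : bset (2 * a) = (bset a).image (· + 1) := by
  simp [bset, Nat.bitIndices_two_mul, toFinset_map']

lemma bset_two_mul_add_one (a : ℕ) :
    bset (2 * a + 1) = insert 0 ((bset a).image (· + 1)) := by
  simp [bset, Nat.bitIndices_two_mul_add_one, toFinset_map']

lemma twoPowSum_bset (n : ℕ) : ∑ i ∈ bset n, 2 ^ i = n :=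
  Finset.twoPowSum_toFinset_bitIndices n

lemma bset_twoPowSum (s : Finset ℕ) : bset (∑ i ∈ s, 2 ^ i) = s :=
  Finset.toFinset_bitIndices_twoPowSum s

lemma le_of_bset_subset {k s : ℕ} (h : bset k ⊆ bset s) : k ≤ s := by
  calc k = ∑ i ∈ bset k, 2 ^ i := (twoPowSum_bset k).symm
  _ ≤ ∑ i ∈ bset s, 2 ^ i := Finset.sum_le_sum_of_subset h
  _ = s := twoPowSum_bset s

lemma succ_inj' : Function.Injective (· + 1 : ℕ → ℕ) := add_left_injective 1

lemma disj_shift (A B : Finset ℕ) :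
    Disjoint (A.image (· + 1)) (B.image (· + 1)) ↔ Disjoint A B :=
  Finset.disjoint_image succ_inj'

lemma zero_notMem_shift (A : Finset ℕ) : 0 ∉ A.image (· + 1) := by simp

lemma lucas_aux : ∀ N s t, s + t ≤ N →
    Nat.choose (s + t) s % 2 = if Disjoint (bset s) (bset t) then 1 else 0 := by
  intro N
  induction N with
  | zero =>
    intro s t h
    have hs : s = 0 := by omega
    have ht : t = 0 := by omega
    subst hs; subst ht
    simp [bset]
  | succ N ih =>
    intro s t h
    haveI : Fact (Nat.Prime 2) := ⟨Nat.prime_two⟩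
    have key : Nat.choose (s+t) s % 2
        = (Nat.choose ((s+t)%2) (s%2) * Nat.choose ((s+t)/2) (s/2)) % 2 :=
      Choose.choose_modEq_choose_mod_mul_choose_div_nat
    obtain ⟨a, u, hu, rfl⟩ : ∃ a u, u ≤ 1 ∧ s = 2*a + u := ⟨s/2, s%2, by omega, by omega⟩
    obtain ⟨b, v, hv, rfl⟩ : ∃ b v, v ≤ 1 ∧ t = 2*b + v := ⟨t/2, t%2, by omega, by omega⟩
    interval_cases u <;> interval_cases v <;>
      try simp only [Nat.add_zero] at key h ⊢
    · -- u=0 v=0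
      rcases Nat.eq_zero_or_pos (a + b) with h0 | h0
      · have ha : a = 0 := by omega
        have hb : b = 0 := by omega
        subst ha; subst hb; simp [bset]
      · have e1 : (2*a + 2*b) % 2 = 0 := by omega
        have e2 : (2*a + 2*b) / 2 = a + b := by omega
        have e3 : (2*a) % 2 = 0 := by omega
        have e4 : (2*a) / 2 = a := by omega
        rw [key, e1, e2, e3, e4, Nat.choose_zero_right, one_mul, ih a b (by omega)]
        simp only [bset_two_mul, disj_shift]
    · -- u=0 v=1
      have e1 : (2*a + (2*b+1)) % 2 = 1 := by omega
      have e2 : (2*a + (2*b+1)) / 2 = a + b := by omega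
      have e3 : (2*a) % 2 = 0 := by omega
      have e4 : (2*a) / 2 = a := by omega
      rw [key, e1, e2, e3, e4, Nat.choose_zero_right, one_mul, ih a b (by omega)]
      simp only [bset_two_mul, bset_two_mul_add_one, Finset.disjoint_insert_right,
        zero_notMem_shift, true_and, disj_shift, not_false_iff]
    · -- u=1 v=0
      have e1 : (2*a + 1 + 2*b) % 2 = 1 := by omega
      have e2 : (2*a + 1 + 2*b) / 2 = a + b := by omega
      have e3 : (2*a+1) % 2 = 1 := by omega
      have e4 : (2*a+1) / 2 = a := by omega
      rw [key, e1, e2, e3, e4, Nat.choose_self, one_mul, ih a b (by omega)]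
      simp only [bset_two_mul, bset_two_mul_add_one, Finset.disjoint_insert_left,
        zero_notMem_shift, true_and, disj_shift, not_false_iff]
    · -- u=1 v=1
      have e1 : (2*a + 1 + (2*b+1)) % 2 = 0 := by omega
      have e3 : (2*a+1) % 2 = 1 := by omega
      rw [key, e1, e3]
      have h01 : Nat.choose 0 1 = 0 := rfl
      have hnd : ¬ Disjoint (bset (2*a+1)) (bset (2*b+1)) := by
        simp [bset_two_mul_add_one, Finset.disjoint_insert_left]
      rw [h01, Nat.zero_mul, if_neg hnd]

lemma key_sum (m s t : ℕ) (hs : s < m) :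
    ∑ k ∈ Finset.range m,
      (if bset k ⊆ bset s then (1:ℤ) else 0) * (-1) ^ (bset k).card *
        (if bset k ⊆ bset t then (1:ℤ) else 0)
      = if Disjoint (bset s) (bset t) then 1 else 0 := by
  set I := bset s ∩ bset t with hI
  have hterm : ∀ k, (if bset k ⊆ bset s then (1:ℤ) else 0) * (-1) ^ (bset k).card *
      (if bset k ⊆ bset t then (1:ℤ) else 0)
      = if bset k ⊆ I then (-1) ^ (bset k).card else 0 := by
    intro k
    by_cases h1 : bset k ⊆ bset s <;> by_cases h2 : bset k ⊆ bset t <;>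
      simp [h1, h2, hI, Finset.subset_inter_iff]
  rw [Finset.sum_congr rfl fun k _ => hterm k, ← Finset.sum_filter]
  have hbij : ∑ k ∈ (Finset.range m).filter (fun k => bset k ⊆ I), (-1:ℤ) ^ (bset k).card
      = ∑ A ∈ I.powerset, (-1:ℤ) ^ A.card := by
    refine Finset.sum_nbij' (fun k => bset k) (fun A => ∑ i ∈ A, 2 ^ i) ?_ ?_ ?_ ?_ ?_
    · intro k hk
      simp only [Finset.mem_filter, Finset.mem_range] at hk
      exact Finset.mem_powerset.mpr hk.2
    · intro A hA
      rw [Finset.mem_powerset] at hA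
      simp only [Finset.mem_filter, Finset.mem_range, bset_twoPowSum]
      refine ⟨?_, hA⟩
      calc ∑ i ∈ A, 2 ^ i ≤ ∑ i ∈ bset s, 2 ^ i :=
            Finset.sum_le_sum_of_subset (hA.trans Finset.inter_subset_left)
      _ = s := twoPowSum_bset s
      _ < m := hs
    · intro k _; exact twoPowSum_bset k
    · intro A _; exact bset_twoPowSum A
    · intro k _; rfl
  rw [hbij, Finset.sum_powerset_neg_one_pow_card]
  congr 1
  simp [hI, eq_comm, Finset.disjoint_iff_inter_eq_empty]

lemma card_bset_two_mul (a : ℕ) : (bset (2*a)).card = (bset a).card := by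
  rw [bset_two_mul, Finset.card_image_of_injective _ succ_inj']

lemma card_bset_two_mul_add_one (a : ℕ) :
    (bset (2*a+1)).card = (bset a).card + 1 := by
  rw [bset_two_mul_add_one, Finset.card_insert_of_notMem (by simp),
    Finset.card_image_of_injective _ succ_inj']

lemma pow_sum_card (n : ℕ) :
    (-1:ℤ) ^ (∑ k ∈ Finset.range (2*n), (bset k).card) = (-1) ^ n := by
  induction n with
  | zero => simp
  | succ n ih =>
    have h2 : 2 * (n+1) = 2*n + 1 + 1 := by ring
    rw [h2, Finset.sum_range_succ, Finset.sum_range_succ, card_bset_two_mul,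
      card_bset_two_mul_add_one, pow_add, pow_add, ih, pow_add]
    ring_nf
    rw [pow_mul]
    norm_num
    rcases Nat.even_or_odd ((bset n).card) with h | h
    · left; exact h.neg_one_pow
    · right; exact h.neg_one_pow

theorem det_pascal_mod_two_even (n : ℕ) (hn : 1 ≤ n) :
    Matrix.det (Matrix.of fun s t : Fin (2 * n) =>
      ((Nat.choose (s.val + t.val) s.val % 2 : ℕ) : ℤ)) = (-1) ^ n := by
  set m := 2 * n with hm
  set Z : Matrix (Fin m) (Fin m) ℤ :=
    Matrix.of fun s k => if bset k.val ⊆ bset s.val then 1 else 0 with hZ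
  set D : Matrix (Fin m) (Fin m) ℤ :=
    Matrix.diagonal fun k : Fin m => (-1) ^ (bset k.val).card with hD
  have hfact : (Matrix.of fun s t : Fin m =>
      ((Nat.choose (s.val + t.val) s.val % 2 : ℕ) : ℤ)) = Z * D * Zᵀ := by
    ext s t
    have hent : (Z * D * Zᵀ) s t
        = ∑ k : Fin m, (if bset k.val ⊆ bset s.val then (1:ℤ) else 0) *
            (-1) ^ (bset k.val).card * (if bset k.val ⊆ bset t.val then (1:ℤ) else 0) := by
      rw [Matrix.mul_apply]
      refine Finset.sum_congr rfl fun k _ => ?_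
      rw [Matrix.mul_diagonal, Matrix.transpose_apply]
      simp [hZ]
    rw [hent, Fin.sum_univ_eq_sum_range (fun k =>
      (if bset k ⊆ bset s.val then (1:ℤ) else 0) * (-1) ^ (bset k).card *
        (if bset k ⊆ bset t.val then (1:ℤ) else 0)) m]
    rw [key_sum m s.val t.val s.isLt, Matrix.of_apply,
      lucas_aux (s.val + t.val) s.val t.val le_rfl]
    split_ifs <;> simp
  rw [hfact, Matrix.det_mul, Matrix.det_mul, Matrix.det_transpose]
  have htri : Matrix.BlockTriangular Z OrderDual.toDual := by
    intro i j hij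
    have hij' : i < j := hij
    simp only [hZ, Matrix.of_apply]
    rw [if_neg]
    intro hsub
    exact absurd (le_of_bset_subset hsub) (by exact Nat.not_le.mpr hij')
  have hZdet : Z.det = 1 := by
    rw [Matrix.det_of_lowerTriangular Z htri]
    refine Finset.prod_eq_one fun k _ => ?_
    simp [hZ]
  have hDdet : D.det = (-1:ℤ) ^ n := by
    rw [hD, Matrix.det_diagonal]
    rw [Finset.prod_pow_eq_pow_sum]
    rw [Fin.sum_univ_eq_sum_range (fun k => (bset k).card) m]
    exact pow_sum_card n
  rw [hZdet, hDdet]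
  ring
end

section
/- Let P(m) be the m×m integer matrix with entries P_{s,t} = C(s+t, s) mod 2 ∈ {0,1} for 0 ≤ s,t < m, and let ds(n) denote the number of ones in the binary expansion of n. Then det(P(2n+1)) = (-1)^{n + ds(n)} for all n ≥ 0. -/
open Matrix Nat

/-- The Pascal mod-two matrix of size `m`. -/
def Pm (m : ℕ) : Matrix (Fin m) (Fin m) ℤ :=
  Matrix.of fun s t : Fin m => ((Nat.choose (s.val + t.val) s.val % 2 : ℕ) : ℤ)

/-- Lucas' theorem mod 2. -/
lemma lucas2 (n k : ℕ) :
    Nat.choose n k % 2 = (Nat.choose (n % 2) (k % 2) * Nat.choose (n / 2) (k / 2)) % 2 :=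
  haveI : Fact (Nat.Prime 2) := ⟨Nat.prime_two⟩
  Choose.choose_modEq_choose_mod_mul_choose_div_nat (p := 2)

lemma l_ee (a b : ℕ) : Nat.choose (2*a + 2*b) (2*a) % 2 = Nat.choose (a+b) a % 2 := by
  rw [show 2*a+2*b = 2*(a+b) by ring, lucas2]
  simp [Nat.mul_div_cancel_left, Nat.mul_mod_right]

lemma l_eo (a b : ℕ) : Nat.choose (2*a + (2*b+1)) (2*a) % 2 = Nat.choose (a+b) a % 2 := by
  rw [show 2*a+(2*b+1) = 2*(a+b)+1 by ring, lucas2]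
  have h1 : (2*(a+b)+1) % 2 = 1 := by omega
  have h2 : (2*(a+b)+1) / 2 = a+b := by omega
  have h3 : (2*a) % 2 = 0 := by omega
  have h4 : (2*a) / 2 = a := by omega
  rw [h1, h2, h3, h4]; simp

lemma l_oe (a b : ℕ) : Nat.choose ((2*a+1) + 2*b) (2*a+1) % 2 = Nat.choose (a+b) a % 2 := by
  rw [show (2*a+1)+2*b = 2*(a+b)+1 by ring, lucas2]
  have h1 : (2*(a+b)+1) % 2 = 1 := by omega
  have h2 : (2*(a+b)+1) / 2 = a+b := by omega
  have h3 : (2*a+1) % 2 = 1 := by omega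
  have h4 : (2*a+1) / 2 = a := by omega
  rw [h1, h2, h3, h4]; simp

lemma l_oo (a b : ℕ) : Nat.choose ((2*a+1) + (2*b+1)) (2*a+1) % 2 = 0 := by
  rw [show (2*a+1)+(2*b+1) = 2*(a+b+1) by ring, lucas2]
  have h1 : (2*(a+b+1)) % 2 = 0 := by omega
  have h3 : (2*a+1) % 2 = 1 := by omega
  rw [h1, h3]; simp

/-- Key determinant identity. -/
lemma det_aux {a b : ℕ} (A : Matrix (Fin a) (Fin a) ℤ) (C : Matrix (Fin b) (Fin a) ℤ)
    (g : Fin b → Fin a) :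
    (Matrix.fromBlocks A (A.submatrix id g) C 0).det
      = (-1)^b * A.det * (C.submatrix id g).det := by
  classical
  set J : Matrix (Fin a) (Fin b) ℤ := Matrix.of fun i j => if i = g j then 1 else 0 with hJ
  have hAJ : A * J = A.submatrix id g := by
    ext i j
    simp [Matrix.mul_apply, hJ, Matrix.submatrix_apply, mul_ite, Finset.sum_ite_eq']
  have hCJ : C * J = C.submatrix id g := by
    ext i j
    simp [Matrix.mul_apply, hJ, Matrix.submatrix_apply, mul_ite, Finset.sum_ite_eq']
  have hfac : Matrix.fromBlocks A (A.submatrix id g) C 0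
      = Matrix.fromBlocks A 0 C (-(C.submatrix id g)) * Matrix.fromBlocks 1 J 0 1 := by
    rw [Matrix.fromBlocks_multiply]
    simp [hAJ, hCJ]
  rw [hfac, Matrix.det_mul, Matrix.det_fromBlocks_zero₁₂, Matrix.det_fromBlocks_zero₂₁,
    Matrix.det_neg]
  simp only [Matrix.det_one, Fintype.card_fin, mul_one]
  ring

/-- Interleaving equivalence for odd sizes. -/
def eOdd (m : ℕ) : (Fin (m+1) ⊕ Fin m) ≃ Fin (2*m+1) where
  toFun x := x.elim (fun s => ⟨2*s.val, by omega⟩) (fun s => ⟨2*s.val+1, by omega⟩)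
  invFun t := if h : t.val % 2 = 0 then Sum.inl ⟨t.val / 2, by omega⟩
              else Sum.inr ⟨t.val / 2, by omega⟩
  left_inv x := by
    rcases x with s | s <;> dsimp only [Sum.elim_inl, Sum.elim_inr] <;>
      split_ifs with h <;>
      first
        | exact congrArg Sum.inl (Fin.ext (by first | omega | (simp; omega) | simp))
        | exact congrArg Sum.inr (Fin.ext (by first | omega | (simp; omega) | simp))
        | (exfalso; omega)
  right_inv t := by
    dsimp only
    split_ifs with h <;>
      exact Fin.ext (by first | omega | (simp; omega) | simp)

/-- Interleaving equivalence for even sizes. -/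
def eEven (m : ℕ) : (Fin m ⊕ Fin m) ≃ Fin (2*m) where
  toFun x := x.elim (fun s => ⟨2*s.val, by omega⟩) (fun s => ⟨2*s.val+1, by omega⟩)
  invFun t := if h : t.val % 2 = 0 then Sum.inl ⟨t.val / 2, by omega⟩
              else Sum.inr ⟨t.val / 2, by omega⟩
  left_inv x := by
    rcases x with s | s <;> dsimp only [Sum.elim_inl, Sum.elim_inr] <;>
      split_ifs with h <;>
      first
        | exact congrArg Sum.inl (Fin.ext (by first | omega | (simp; omega) | simp))
        | exact congrArg Sum.inr (Fin.ext (by first | omega | (simp; omega) | simp))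
        | (exfalso; omega)
  right_inv t := by
    dsimp only
    split_ifs with h <;>
      exact Fin.ext (by first | omega | (simp; omega) | simp)

lemma det_even (m : ℕ) : (Pm (2*m)).det = (-1)^m * (Pm m).det * (Pm m).det := by
  have h := Matrix.det_submatrix_equiv_self (eEven m) (Pm (2*m))
  rw [← h]
  have hblock : (Pm (2*m)).submatrix (eEven m) (eEven m)
      = Matrix.fromBlocks (Pm m) ((Pm m).submatrix id id) (Pm m) 0 := by
    ext i j
    rcases i with s | s <;> rcases j with t | t <;>
      simp only [Matrix.submatrix_apply, Matrix.fromBlocks_apply₁₁, Matrix.fromBlocks_apply₁₂,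
        Matrix.fromBlocks_apply₂₁, Matrix.fromBlocks_apply₂₂, eEven, Equiv.coe_fn_mk,
        Sum.elim_inl, Sum.elim_inr, Pm, Matrix.of_apply, id]
    · exact_mod_cast l_ee s.val t.val
    · exact_mod_cast l_eo s.val t.val
    · exact_mod_cast l_oe s.val t.val
    · simp only [Matrix.zero_apply]
      exact_mod_cast l_oo s.val t.val
  rw [hblock, det_aux, Matrix.submatrix_id_id]

lemma det_odd (m : ℕ) : (Pm (2*m+1)).det = (-1)^m * (Pm (m+1)).det * (Pm m).det := by
  have h := Matrix.det_submatrix_equiv_self (eOdd m) (Pm (2*m+1))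
  rw [← h]
  set C : Matrix (Fin m) (Fin (m+1)) ℤ :=
    Matrix.of fun s t => ((Nat.choose (s.val + t.val) s.val % 2 : ℕ) : ℤ) with hC
  have hblock : (Pm (2*m+1)).submatrix (eOdd m) (eOdd m)
      = Matrix.fromBlocks (Pm (m+1)) ((Pm (m+1)).submatrix id Fin.castSucc) C 0 := by
    ext i j
    rcases i with s | s <;> rcases j with t | t <;>
      simp only [Matrix.submatrix_apply, Matrix.fromBlocks_apply₁₁, Matrix.fromBlocks_apply₁₂,
        Matrix.fromBlocks_apply₂₁, Matrix.fromBlocks_apply₂₂, eOdd, Equiv.coe_fn_mk,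
        Sum.elim_inl, Sum.elim_inr, Pm, hC, Matrix.of_apply, id, Fin.coe_castSucc]
    · exact_mod_cast l_ee s.val t.val
    · exact_mod_cast l_eo s.val t.val
    · exact_mod_cast l_oe s.val t.val
    · simp only [Matrix.zero_apply]
      exact_mod_cast l_oo s.val t.val
  rw [hblock, det_aux]
  have hCP : C.submatrix id Fin.castSucc = Pm m := by
    ext i j
    simp [hC, Pm, Matrix.submatrix_apply]
  rw [hCP]

lemma ds_even (j : ℕ) (hj : j ≠ 0) :
    (Nat.digits 2 (2*j)).sum = (Nat.digits 2 j).sum := by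
  rw [Nat.digits_def' (by norm_num : 1 < 2) (by omega)]
  have h1 : 2*j % 2 = 0 := by omega
  have h2 : 2*j / 2 = j := by omega
  rw [h1, h2]
  simp

lemma ds_odd (j : ℕ) :
    (Nat.digits 2 (2*j+1)).sum = (Nat.digits 2 j).sum + 1 := by
  rw [Nat.digits_def' (by norm_num : 1 < 2) (by omega)]
  have h1 : (2*j+1) % 2 = 1 := by omega
  have h2 : (2*j+1) / 2 = j := by omega
  rw [h1, h2]
  simp [add_comm]

lemma npow (a b : ℕ) (h : a % 2 = b % 2) : ((-1 : ℤ))^a = (-1)^b := by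
  rw [neg_one_pow_eq_pow_mod_two, h, ← neg_one_pow_eq_pow_mod_two]

lemma Pm_one : (Pm 1).det = 1 := by
  rw [Matrix.det_fin_one]
  simp [Pm]

lemma Pm_zero : (Pm 0).det = 1 := Matrix.det_fin_zero

lemma main_claim (n : ℕ) :
    (Pm (2*n)).det = (-1)^n ∧
    (Pm (2*n+1)).det = (-1)^(n + (Nat.digits 2 n).sum) := by
  induction n using Nat.strong_induction_on with
  | _ n ih =>
    match n with
    | 0 =>
      constructor
      · simpa using Pm_zero
      · simpa using Pm_one
    | 1 =>
      have h2 : (Pm 2).det = -1 := by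
        have := det_even 1
        rw [Pm_one] at this
        simpa using this
      constructor
      · simpa using h2
      · have hds : (Nat.digits 2 1).sum = 1 := by simpa using ds_odd 0
        show (Pm (2*1+1)).det = _
        rw [det_odd 1, Pm_one, h2]
        norm_num [hds]
    | (k+2) =>
      rcases Nat.even_or_odd' (k+2) with ⟨j, hj | hj⟩
      · -- n = 2*j, j ≥ 1
        have hj1 : 1 ≤ j := by omega
        have hlt : j < k + 2 := by omega
        obtain ⟨ihe, iho⟩ := ih j hlt
        constructor
        · rw [hj, det_even (2*j), ihe]
          rw [← pow_add, ← pow_add]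
          exact npow _ _ (by omega)
        · rw [hj, det_odd (2*j), show 2*j+1 = 2*j+1 from rfl, iho, ihe,
            ds_even j (by omega)]
          rw [← pow_add, ← pow_add]
          exact npow _ _ (by omega)
      · -- n = 2*j+1, j ≥ 1 since n ≥ 2
        have hj1 : 1 ≤ j := by omega
        have hlt : j < k + 2 := by omega
        have hlt' : j + 1 < k + 2 := by omega
        obtain ⟨ihe, iho⟩ := ih j hlt
        obtain ⟨ihe', _⟩ := ih (j+1) hlt'
        constructor
        · rw [hj, det_even (2*j+1), iho]
          rw [← pow_add, ← pow_add]
          exact npow _ _ (by omega)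
        · have h1 : 2*(2*j+1)+1 = 2*(2*j+1)+1 := rfl
          rw [hj, det_odd (2*j+1), show 2*j+1+1 = 2*(j+1) by ring, ihe', iho,
            ds_odd j]
          rw [← pow_add, ← pow_add]
          exact npow _ _ (by omega)

theorem det_pascal_mod_two_odd (n : ℕ) :
    Matrix.det (Matrix.of fun s t : Fin (2 * n + 1) =>
      ((Nat.choose (s.val + t.val) s.val % 2 : ℕ) : ℤ)) =
      (-1) ^ (n + (Nat.digits 2 n).sum) := by
  exact (main_claim n).2
end

section
/- Define f : ℕ → ℚ by f(0) = 1, f(1) = -1, and for n = 2^a + b with 1 ≤ b < 2^a (a ≥ 1): f(n) = 3·f(b) if 2b < 2^a, and f(n) = f(b)/3 otherwise. Then for every n with binary expansion n = Σ_i ν_i 2^i, f(n) = (-1)^n · Π_{i≥0} 3^{(1−2ν_i)·ν_{i+1}}. -/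
/-- `f(0)=1`, `f(1)=-1`, and for `n = 2^a + b ≥ 2` with `0 ≤ b < 2^a`:
`f(n) = 3 f(b)` if `2b < 2^a`, and `f(n) = f(b)/3` otherwise. -/
def beebF : ℕ → ℚ
  | 0 => 1
  | 1 => -1
  | (n + 2) =>
      if 2 * ((n + 2) - 2 ^ Nat.log2 (n + 2)) < 2 ^ Nat.log2 (n + 2) then
        3 * beebF ((n + 2) - 2 ^ Nat.log2 (n + 2))
      else
        beebF ((n + 2) - 2 ^ Nat.log2 (n + 2)) / 3
decreasing_by
  all_goals
    have h2 : 2 ≤ 2 ^ Nat.log2 (n + 2) := by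
      have : (1:ℕ) ≤ Nat.log2 (n + 2) := by
        rw [Nat.le_log2 (by omega)]; omega
      calc (2:ℕ) = 2 ^ 1 := by norm_num
      _ ≤ 2 ^ Nat.log2 (n + 2) := Nat.pow_le_pow_right (by norm_num) this
  all_goals omega

/-- `i`-th binary digit of `n`, as an integer. -/
def bit' (n i : ℕ) : ℤ := if n.testBit i then 1 else 0

/-! Write `n ≥ 2` as `2^(c+1) + b` with `b < 2^(c+1)`. The binary digits of `n` are those of `b`
with an extra leading `1` in position `c+1`, so the product for `n` is the product for `b` times
the single new factor `3^(1 - 2ν_c(b))`, while all factors beyond the leading digit are `1`.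
That factor is `3` when `ν_c(b) = 0`, i.e. `2b < 2^(c+1)`, and `1/3` otherwise, exactly as in the
recursion; the sign is unchanged since `2^(c+1)` is even. -/

open Finset

def digitFactor (n i : ℕ) : ℚ := 3 ^ ((1 - 2 * bit' n i) * bit' n (i + 1))

lemma bit'_eq_zero_of_lt_two_pow {n i : ℕ} (h : n < 2 ^ i) : bit' n i = 0 := by
  simp [bit', Nat.testBit_lt_two_pow h]

lemma bit'_two_pow_add_of_lt {a i : ℕ} (hi : i < a) (b : ℕ) : bit' (2 ^ a + b) i = bit' b i := by
  simp [bit', Nat.testBit_two_pow_add_gt hi]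

lemma bit'_two_pow_add_self {a b : ℕ} (hb : b < 2 ^ a) : bit' (2 ^ a + b) a = 1 := by
  simp [bit', Nat.testBit_two_pow_add_eq, Nat.testBit_lt_two_pow hb]

lemma bit'_eq_ite_of_lt_two_pow_succ {b c : ℕ} (hb : b < 2 ^ (c + 1)) :
    bit' b c = if 2 * b < 2 ^ (c + 1) then 0 else 1 := by
  rw [pow_succ] at hb ⊢
  split_ifs with h
  · exact bit'_eq_zero_of_lt_two_pow (by omega)
  · have hbit : b.testBit c = true :=
      Nat.testBit_of_two_pow_le_and_two_pow_add_one_gt (by omega) (by rw [pow_succ]; omega)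
    simp [bit', hbit]

lemma digitFactor_eq_one_of_lt_two_pow {n i : ℕ} (h : n < 2 ^ (i + 1)) : digitFactor n i = 1 := by
  simp [digitFactor, bit'_eq_zero_of_lt_two_pow h]

lemma prod_range_digitFactor_of_le {n m k : ℕ} (hn : n < 2 ^ (m + 1)) (hmk : m ≤ k) :
    ∏ i ∈ range k, digitFactor n i = ∏ i ∈ range m, digitFactor n i := by
  refine (prod_subset (range_subset_range.2 hmk) fun i hik him ↦ ?_).symm
  have hmi : m ≤ i := by simpa using him
  exact digitFactor_eq_one_of_lt_two_pow (hn.trans_le (Nat.pow_le_pow_right two_pos (by omega)))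

lemma prod_range_digitFactor_eq_of_lt_two_pow {n k : ℕ} (hn : n < 2 ^ (k + 1)) :
    ∏ i ∈ range k, digitFactor n i = ∏ i ∈ range n, digitFactor n i := by
  have hn' : n < 2 ^ (n + 1) := Nat.lt_two_pow_self.trans (Nat.pow_lt_pow_succ one_lt_two)
  rcases le_total k n with h | h
  · exact (prod_range_digitFactor_of_le hn h).symm
  · exact prod_range_digitFactor_of_le hn' h

lemma prod_range_digitFactor_two_pow_add {b c : ℕ} (hb : b < 2 ^ (c + 1)) :
    ∏ i ∈ range (c + 1), digitFactor (2 ^ (c + 1) + b) i =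
      (∏ i ∈ range c, digitFactor b i) * 3 ^ (1 - 2 * bit' b c) := by
  have hlow : ∀ i ∈ range c, digitFactor (2 ^ (c + 1) + b) i = digitFactor b i := by
    intro i hi
    have hic : i < c := mem_range.1 hi
    simp only [digitFactor, bit'_two_pow_add_of_lt (by omega : i < c + 1),
      bit'_two_pow_add_of_lt (by omega : i + 1 < c + 1)]
  rw [prod_range_succ, prod_congr rfl hlow, digitFactor, bit'_two_pow_add_self hb,
    bit'_two_pow_add_of_lt c.lt_succ_self, mul_one]

lemma exists_eq_two_pow_succ_add {n : ℕ} (hn : 2 ≤ n) :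
    ∃ c b, b < 2 ^ (c + 1) ∧ n = 2 ^ (c + 1) + b := by
  have hlog : 1 ≤ n.log2 := (Nat.le_log2 (by omega)).2 (by omega)
  have hle := Nat.log2_self_le (n := n) (by omega)
  have hlt := Nat.lt_log2_self (n := n)
  obtain ⟨c, hc⟩ : ∃ c, n.log2 = c + 1 := ⟨n.log2 - 1, by omega⟩
  rw [hc, pow_succ] at hle hlt
  exact ⟨c, n - 2 ^ (c + 1), by rw [pow_succ]; omega, by rw [pow_succ]; omega⟩

lemma beebF_two_pow_add {b c : ℕ} (hb : b < 2 ^ (c + 1)) :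
    beebF (2 ^ (c + 1) + b) = if 2 * b < 2 ^ (c + 1) then 3 * beebF b else beebF b / 3 := by
  obtain ⟨m, hm⟩ : ∃ m, 2 ^ (c + 1) + b = m + 2 :=
    ⟨2 ^ (c + 1) + b - 2, by have := Nat.one_lt_two_pow c.succ_ne_zero; omega⟩
  have hlog : (m + 2).log2 = c + 1 :=
    (Nat.log2_eq_iff (by omega)).2 ⟨by omega, by rw [pow_succ 2 (c + 1)]; omega⟩
  have hsub : m + 2 - 2 ^ (c + 1) = b := by omega
  rw [hm, beebF.eq_3, hlog, hsub]

theorem beebF_closed_form (n : ℕ) :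
    beebF n = (-1) ^ n *
      ∏ i ∈ Finset.range n, (3 : ℚ) ^ (((1 - 2 * bit' n i) * bit' n (i + 1)) : ℤ) := by
  change beebF n = (-1) ^ n * ∏ i ∈ range n, digitFactor n i
  induction n using Nat.strong_induction_on with
  | _ n ih =>
  match n with
  | 0 => simp [beebF]
  | 1 => simp [beebF, digitFactor, bit'_eq_zero_of_lt_two_pow (show 1 < 2 ^ 1 by norm_num)]
  | m + 2 =>
    obtain ⟨c, b, hb, hn⟩ := exists_eq_two_pow_succ_add (n := m + 2) (by omega)
    rw [hn] at ih ⊢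
    have hN : 2 ^ (c + 1) + b < 2 ^ (c + 1 + 1) := by rw [pow_succ 2 (c + 1)]; omega
    have hsign : (-1 : ℚ) ^ (2 ^ (c + 1) + b) = (-1) ^ b := by
      rw [pow_add, ((Nat.even_pow' c.succ_ne_zero).2 even_two).neg_one_pow, one_mul]
    rw [beebF_two_pow_add hb, ih b (by omega), hsign,
      ← prod_range_digitFactor_eq_of_lt_two_pow hN, prod_range_digitFactor_two_pow_add hb,
      prod_range_digitFactor_eq_of_lt_two_pow hb, bit'_eq_ite_of_lt_two_pow_succ hb]
    split_ifs <;> simp <;> ring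
end

section
/- Evaluation of q-binomials at roots of unity (q-Lucas theorem): if ω is a primitive n-th root of unity in ℂ, then for all a, b ∈ ℕ, C_ω(a,b) = C(⌊a/n⌋, ⌊b/n⌋) · C_ω(a mod n, b mod n), where C_ω denotes the Gaussian binomial coefficient evaluated at q = ω and C is the ordinary binomial coefficient. -/
/-- The Gaussian binomial coefficient `C_q(n, k)` as a polynomial in `q`,
defined by the recurrence `C_q(n,k) = q^k C_q(n-1,k) + C_q(n-1,k-1)`. -/
noncomputable def gaussBinomial : ℕ → ℕ → Polynomial ℤ
  | _, 0 => 1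
  | 0, _ + 1 => 0
  | n + 1, k + 1 =>
      Polynomial.X ^ (k + 1) * gaussBinomial n (k + 1) + gaussBinomial n k

open Polynomial

lemma gb_zero_right (a : ℕ) : gaussBinomial a 0 = 1 := by cases a <;> rfl

lemma gb_succ (a b : ℕ) : gaussBinomial (a+1) (b+1)
    = X^(b+1) * gaussBinomial a (b+1) + gaussBinomial a b := rfl

lemma gb_eq_zero : ∀ a b, a < b → gaussBinomial a b = 0 := by
  intro a
  induction a with
  | zero => intro b hb; cases b with
    | zero => omega
    | succ m => rfl
  | succ n ih =>
    intro b hb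
    cases b with
    | zero => omega
    | succ m =>
      rw [gb_succ, ih (m+1) (by omega), ih m (by omega)]
      ring

lemma gb_self : ∀ a, gaussBinomial a a = 1 := by
  intro a
  induction a with
  | zero => rfl
  | succ n ih => rw [gb_succ, gb_eq_zero n (n+1) (by omega), ih]; ring

lemma gb_PQ : ∀ n : ℕ,
    (∀ k ≤ n, (X^(k+1)-1) * gaussBinomial (n+1) (k+1)
      = (X^(n+1)-1) * gaussBinomial n k) ∧
    (∀ k ≤ n, (X^(n+1-k)-1) * gaussBinomial (n+1) k
      = (X^(n+1)-1) * gaussBinomial n k) := by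
  intro n
  induction n with
  | zero =>
    constructor
    · intro k hk; interval_cases k
      rw [gb_self, gb_self]
    · intro k hk; interval_cases k
      rw [gb_zero_right, gb_zero_right]
  | succ n ih =>
    obtain ⟨P, Q⟩ := ih
    have P' : ∀ k ≤ n + 1, (X^(k+1)-1) * gaussBinomial (n+2) (k+1)
        = (X^(n+2)-1) * gaussBinomial (n+1) k := by
      intro k hk
      rcases eq_or_lt_of_le hk with h | h
      · subst h
        rw [gb_self, gb_self]
      · have hk' : k ≤ n := by omega
        rw [gb_succ]
        have e1 := P k hk'
        have e2 := Q k hk'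
        have hx : X^(k+1) * X^(n+1-k) = (X : Polynomial ℤ)^(n+2) := by
          rw [← pow_add]; congr 1; omega
        calc (X^(k+1)-1) * (X^(k+1) * gaussBinomial (n+1) (k+1) + gaussBinomial (n+1) k)
            = X^(k+1) * ((X^(k+1)-1) * gaussBinomial (n+1) (k+1))
              + (X^(k+1)-1) * gaussBinomial (n+1) k := by ring
          _ = X^(k+1) * ((X^(n+1-k)-1) * gaussBinomial (n+1) k)
              + (X^(k+1)-1) * gaussBinomial (n+1) k := by rw [e1, e2]
          _ = (X^(k+1) * X^(n+1-k)) * gaussBinomial (n+1) k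
              - gaussBinomial (n+1) k := by ring
          _ = (X^(n+2)-1) * gaussBinomial (n+1) k := by rw [hx]; ring
    refine ⟨P', ?_⟩
    intro k hk
    cases k with
    | zero => rw [gb_zero_right, gb_zero_right]; norm_num
    | succ j =>
      have hj : j ≤ n := by omega
      have e1 := P j hj
      have e2 := Q j hj
      have h1 : n + 2 - (j+1) = n + 1 - j := by omega
      have hx : X^(j+1) * X^(n+1-j) = (X : Polynomial ℤ)^(n+2) := by
        rw [← pow_add]; congr 1; omega
      rw [gb_succ, h1]
      calc (X^(n+1-j)-1) * (X^(j+1) * gaussBinomial (n+1) (j+1) + gaussBinomial (n+1) j)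
          = X^(j+1) * X^(n+1-j) * gaussBinomial (n+1) (j+1)
            - X^(j+1) * gaussBinomial (n+1) (j+1)
            + (X^(n+1-j)-1) * gaussBinomial (n+1) j := by ring
        _ = X^(n+2) * gaussBinomial (n+1) (j+1)
            - X^(j+1) * gaussBinomial (n+1) (j+1)
            + (X^(n+1)-1) * gaussBinomial n j := by rw [hx, e2]
        _ = X^(n+2) * gaussBinomial (n+1) (j+1)
            - X^(j+1) * gaussBinomial (n+1) (j+1)
            + (X^(j+1)-1) * gaussBinomial (n+1) (j+1) := by rw [e1]
        _ = (X^(n+2)-1) * gaussBinomial (n+1) (j+1) := by ring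

/-- evaluation of the Gaussian binomial at `ω`. -/
noncomputable def gbe (ω : ℂ) (a b : ℕ) : ℂ :=
  Polynomial.eval₂ (Int.castRingHom ℂ) ω (gaussBinomial a b)

lemma gbe_zero_right (ω : ℂ) (a : ℕ) : gbe ω a 0 = 1 := by
  simp [gbe, gb_zero_right]

lemma gbe_self (ω : ℂ) (a : ℕ) : gbe ω a a = 1 := by
  simp [gbe, gb_self]

lemma gbe_eq_zero (ω : ℂ) {a b : ℕ} (h : a < b) : gbe ω a b = 0 := by
  simp [gbe, gb_eq_zero a b h]

lemma gbe_succ (ω : ℂ) (a b : ℕ) :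
    gbe ω (a+1) (b+1) = ω^(b+1) * gbe ω a (b+1) + gbe ω a b := by
  simp only [gbe, gb_succ, eval₂_add, eval₂_mul, eval₂_X_pow]

lemma gbe_prim {n : ℕ} {ω : ℂ} (hω : IsPrimitiveRoot ω n) {k : ℕ}
    (h0 : 0 < k) (h1 : k < n) : gbe ω n k = 0 := by
  obtain ⟨m, rfl⟩ : ∃ m, n = m + 1 := ⟨n - 1, by omega⟩
  obtain ⟨j, rfl⟩ : ∃ j, k = j + 1 := ⟨k - 1, by omega⟩
  have e := (gb_PQ m).1 j (by omega)
  have := congrArg (Polynomial.eval₂ (Int.castRingHom ℂ) ω) e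
  simp only [eval₂_mul, eval₂_sub, eval₂_X_pow, eval₂_one] at this
  have hω1 : ω ^ (m+1) = 1 := hω.pow_eq_one
  rw [hω1] at this
  simp only [sub_self, zero_mul] at this
  have hne : ω ^ (j+1) - 1 ≠ 0 := by
    intro hc
    exact hω.pow_ne_one_of_pos_of_lt (by omega) h1 (sub_eq_zero.mp hc)
  have : (ω ^ (j+1) - 1) * gbe ω (m+1) (j+1) = 0 := this
  rcases mul_eq_zero.mp this with h | h
  · exact absurd h hne
  · exact h

lemma succ_div_mod_lt {n a : ℕ} (hn : 0 < n) (h : a % n + 1 < n) :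
    (a+1) % n = a % n + 1 ∧ (a+1)/n = a/n := by
  have ha : a + 1 = (a % n + 1) + n * (a/n) := by
    have := Nat.div_add_mod a n; omega
  constructor
  · rw [ha, Nat.add_mul_mod_self_left, Nat.mod_eq_of_lt h]
  · rw [ha, Nat.add_mul_div_left _ _ hn, Nat.div_eq_of_lt h, Nat.zero_add]

lemma succ_div_mod_eq {n a : ℕ} (hn : 0 < n) (h : a % n + 1 = n) :
    (a+1) % n = 0 ∧ (a+1)/n = a/n + 1 := by
  have ha : a + 1 = 0 + n * (a/n + 1) := by
    have h1 := Nat.div_add_mod a n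
    have h2 : n * (a/n + 1) = n * (a/n) + n := by ring
    omega
  constructor
  · rw [ha, Nat.add_mul_mod_self_left, Nat.zero_mod]
  · rw [ha, Nat.add_mul_div_left _ _ hn, Nat.zero_div, Nat.zero_add]

/-- q-Lucas theorem: evaluation of Gaussian binomials at a primitive
`n`-th root of unity. -/
theorem q_lucas (n : ℕ) (hn : 1 ≤ n) (ω : ℂ) (hω : IsPrimitiveRoot ω n) (a b : ℕ) :
    Polynomial.eval₂ (Int.castRingHom ℂ) ω (gaussBinomial a b) =
      (Nat.choose (a / n) (b / n) : ℂ) *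
        Polynomial.eval₂ (Int.castRingHom ℂ) ω (gaussBinomial (a % n) (b % n)) := by
  show gbe ω a b = (Nat.choose (a / n) (b / n) : ℂ) * gbe ω (a % n) (b % n)
  have hω1 : ω ^ n = 1 := hω.pow_eq_one
  induction a generalizing b with
  | zero =>
    cases b with
    | zero => simp [gbe_zero_right]
    | succ m =>
      rw [gbe_eq_zero ω (by omega)]
      rcases Nat.eq_zero_or_pos ((m+1) % n) with h | h
      · have : 0 < (m+1)/n := Nat.div_pos (Nat.le_of_dvd (by omega) (Nat.dvd_of_mod_eq_zero h)) (by omega)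
        rw [Nat.zero_div, Nat.choose_eq_zero_of_lt this]
        simp
      · rw [Nat.zero_mod, gbe_eq_zero ω h]
        simp
  | succ a ih =>
    cases b with
    | zero =>
      simp [gbe_zero_right, Nat.zero_div, Nat.zero_mod, Nat.choose_zero_right]
    | succ m =>
      have har : a % n < n := Nat.mod_lt a (by omega)
      have hmr : m % n < n := Nat.mod_lt m (by omega)
      rw [gbe_succ, ih (m+1), ih m]
      have hωm : ω ^ (m+1) = ω ^ ((m+1) % n) := pow_eq_pow_mod (m+1) hω1
      rcases eq_or_lt_of_le (Nat.succ_le_of_lt har) with haE | haL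
      · -- a % n + 1 = n
        obtain ⟨ha1, ha2⟩ := succ_div_mod_eq (by omega) haE
        rcases eq_or_lt_of_le (Nat.succ_le_of_lt hmr) with hmE | hmL
        · -- m % n + 1 = n : case 4
          obtain ⟨hm1, hm2⟩ := succ_div_mod_eq (by omega) hmE
          rw [ha1, ha2, hm1, hm2, hωm, hm1]
          rw [gbe_zero_right, gbe_zero_right]
          have hse : a % n = m % n := by omega
          rw [hse, gbe_self, pow_zero]
          push_cast [Nat.choose_succ_succ]
          ring
        · -- m % n + 1 < n : case 3
          obtain ⟨hm1, hm2⟩ := succ_div_mod_lt (by omega) hmL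
          rw [ha1, ha2, hm1, hm2, hωm, hm1]
          rw [gbe_eq_zero ω (show (0:ℕ) < m % n + 1 by omega)]
          have haE' : a % n + 1 = n := haE
          have key := gbe_succ ω (a % n) (m % n)
          rw [haE'] at key
          have hz : gbe ω n (m % n + 1) = 0 := gbe_prim hω (by omega) (by omega)
          have hsum : ω ^ (m % n + 1) * gbe ω (a % n) (m % n + 1) + gbe ω (a % n) (m % n) = 0 :=
            key.symm.trans hz
          linear_combination (Nat.choose (a/n) (m/n) : ℂ) * hsum
      · -- a % n + 1 < n
        obtain ⟨ha1, ha2⟩ := succ_div_mod_lt (by omega) haL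
        rcases eq_or_lt_of_le (Nat.succ_le_of_lt hmr) with hmE | hmL
        · -- m % n + 1 = n : case 2
          obtain ⟨hm1, hm2⟩ := succ_div_mod_eq (by omega) hmE
          rw [ha1, ha2, hm1, hm2, hωm, hm1]
          rw [gbe_zero_right, gbe_zero_right]
          rw [show m % n = n - 1 by omega, gbe_eq_zero ω (show a % n < n - 1 by omega), pow_zero]
          ring
        · -- m % n + 1 < n : case 1
          obtain ⟨hm1, hm2⟩ := succ_div_mod_lt (by omega) hmL
          rw [ha1, ha2, hm1, hm2, hωm, hm1]
          rw [gbe_succ]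
          ring
end

section
/- For all natural numbers a and b, the Gaussian binomial coefficient evaluated at q = −1 satisfies C_{−1}(a,b) = C(⌊a/2⌋, ⌊b/2⌋) if it is not the case that a is even and b is odd, and C_{−1}(a,b) = 0 if a is even and b is odd. In particular C_{−1}(a,b) is a nonnegative integer. -/
private lemma gauss_key (a : ℕ) : ∀ b, Polynomial.eval (-1 : ℤ) (gaussBinomial a b) =
    if Even a ∧ Odd b then 0 else (Nat.choose (a / 2) (b / 2) : ℤ) := by
  induction a with
  | zero =>
    intro b
    match b with
    | 0 => simp [gaussBinomial]
    | k + 1 =>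
      simp only [gaussBinomial, Polynomial.eval_zero]
      rcases Nat.even_or_odd k with hk | hk
      · rw [if_pos ⟨Even.zero, hk.add_one⟩]
      · rw [Nat.odd_iff] at hk
        rw [if_neg (by rw [Nat.odd_iff]; omega)]
        rw [Nat.choose_eq_zero_of_lt (by omega)]
        simp
  | succ n ih =>
    intro b
    match b with
    | 0 => simp [gaussBinomial, Nat.odd_iff]
    | k + 1 =>
      simp only [gaussBinomial, Polynomial.eval_add, Polynomial.eval_mul,
        Polynomial.eval_pow, Polynomial.eval_X, ih, Nat.even_iff, Nat.odd_iff]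
      rcases Nat.even_or_odd n with hn | hn <;> rcases Nat.even_or_odd k with hk | hk <;>
        simp only [Nat.even_iff, Nat.odd_iff] at hn hk <;>
        split_ifs <;> try omega
      · rw [show (n + 1) / 2 = n / 2 by omega, show (k + 1) / 2 = k / 2 by omega]
        ring
      · rw [Even.neg_one_pow (by rw [Nat.even_iff]; omega),
          show (n + 1) / 2 = n / 2 by omega, one_mul, add_zero]
      · rw [Odd.neg_one_pow (by rw [Nat.odd_iff]; omega),
          show (k + 1) / 2 = k / 2 by omega]
        ring
      · rw [Even.neg_one_pow (by rw [Nat.even_iff]; omega), one_mul,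
          show (n + 1) / 2 = n / 2 + 1 by omega,
          show (k + 1) / 2 = k / 2 + 1 by omega,
          show n / 2 + 1 = (n / 2).succ from rfl,
          show k / 2 + 1 = (k / 2).succ from rfl,
          Nat.choose_succ_succ]
        push_cast; ring

/-- Evaluation of Gaussian binomials at `q = -1`: the `n = 2` case of the
q-Lucas theorem. In particular the value is a nonnegative integer. -/
theorem gaussBinomial_eval_neg_one (a b : ℕ) :
    (¬ (Even a ∧ Odd b) →
      Polynomial.eval (-1 : ℤ) (gaussBinomial a b) =
        (Nat.choose (a / 2) (b / 2) : ℤ)) ∧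
    ((Even a ∧ Odd b) → Polynomial.eval (-1 : ℤ) (gaussBinomial a b) = 0) ∧
    0 ≤ Polynomial.eval (-1 : ℤ) (gaussBinomial a b) := by
  rw [gauss_key]
  refine ⟨fun h => if_neg h, fun h => if_pos h, ?_⟩
  split <;> positivity
end
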